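/- Let Γ be a countable group and μ a probability measure on Γ whose support generates Γ, with finite entropy H(μ), such that the associated random walk is transient. Then for every n ≥ 0, E[d_G(e, Z_{n+1}) − d_G(e, Z_n)] = Σ_{x∈Γ} μ(x⁻¹) · E[−ln K(x, Z_n)], where K(x, y) = G(x, y)/G(e, y) is the Martin kernel; that is, E[−ln G(e, Z_{n+1}) + ln G(e, Z_n)] = E ⊗ Ẽ[−ln K(X̃₁, Z_n)] with X̃₁ an independent random variable of law μ̃(x) = μ(x⁻¹). -/

import Mathlib

open MeasureTheory ProbabilityTheory Filter
open scoped ENNReal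

noncomputable section

variable {Γ Ω : Type*}

/-- Position at time `n` of the random walk started at `x` with i.i.d. increments
`X 0, X 1, …` : `Z_n = x * X_0 * X_1 * ⋯ * X_{n-1}` (ordered product). -/
def walk [Group Γ] (x : Γ) (X : ℕ → Ω → Γ) (n : ℕ) (ω : Ω) : Γ :=
  x * ((List.range n).map fun k => X k ω).prod

/-- Hitting probability `F(x,y) = ℙ^x[∃ n ≥ 0, Z_n = y]`. -/
def hitProb [Group Γ] [MeasurableSpace Ω] (P : Measure Ω) (X : ℕ → Ω → Γ) (x y : Γ) : ℝ≥0∞ :=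
  P {ω | ∃ n : ℕ, walk x X n ω = y}

/-- Green metric `d_G(x,y) = -ln F(x,y)`. -/
def greenDist [Group Γ] [MeasurableSpace Ω] (P : Measure Ω) (X : ℕ → Ω → Γ) (x y : Γ) : ℝ :=
  - Real.log (hitProb P X x y).toReal

/-- Green function `G(x,y) = Σ_{n≥0} ℙ^x[Z_n = y]`. -/
def greenFn [Group Γ] [MeasurableSpace Ω] (P : Measure Ω) (X : ℕ → Ω → Γ) (x y : Γ) : ℝ≥0∞ :=
  ∑' n : ℕ, P {ω | walk x X n ω = y}

/-- Martin kernel `K(x,y) = G(x,y)/G(e,y)` (real-valued; `G` is finite by transience). -/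
def martinK [Group Γ] [MeasurableSpace Ω] (P : Measure Ω) (X : ℕ → Ω → Γ) (x y : Γ) : ℝ :=
  (greenFn P X x y).toReal / (greenFn P X 1 y).toReal

/-- Word ball of radius `n` for the generating set `S` : elements expressible as a
product of at most `n` generators. -/
def wordBall [Group Γ] (S : Finset Γ) (n : ℕ) : Set Γ :=
  {x | ∃ l : List Γ, l.length ≤ n ∧ (∀ g ∈ l, g ∈ (S : Set Γ)) ∧ l.prod = x}


/-!
Cutting a path at its first visit to `y` (the strong Markov property at a first hitting time)
gives `G(e, y) = F(e, y) G(e, e)`, and transience makes `G(e, e)` finite through the renewal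
inequality for returns to `e`. Since `G(x, y) = G(e, x⁻¹ y)`, this turns `-ln K(x, y)` into
`d_G(e, x⁻¹ y) - d_G(e, y)` wherever `Z_n` can be. Finally `Z_{n+1}` is distributed as `X₁ Z'_n`
with `X₁` independent of a copy `Z'_n` of `Z_n`, so
`E d_G(e, Z_{n+1}) = Σ_x μ(x⁻¹) E d_G(e, x⁻¹ Z_n)`; all these expectations are finite because
`d_G(e, y) ≤ -ln ℙ[Z_n = y]` and the entropy of `Z_n` is at most `n H(μ)`.
-/

lemma ENNReal.tsum_mul_tsum_eq_tsum_sum_range (a b : ℕ → ℝ≥0∞) :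
    (∑' k, a k) * ∑' m, b m = ∑' n, ∑ k ∈ Finset.range (n + 1), a k * b (n - k) := by
  open Finset.HasAntidiagonal in
  calc (∑' k, a k) * ∑' m, b m = ∑' p : ℕ × ℕ, a p.1 * b p.2 := by
        rw [ENNReal.tsum_prod (f := fun k m => a k * b m), ← ENNReal.tsum_mul_right]
        exact tsum_congr fun k => ENNReal.tsum_mul_left.symm
    _ = ∑' q : Σ n, antidiagonal n, a (sigmaAntidiagonalEquivProd q).1
          * b (sigmaAntidiagonalEquivProd q).2 :=
        (sigmaAntidiagonalEquivProd.tsum_eq fun p : ℕ × ℕ => a p.1 * b p.2).symm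
    _ = ∑' n, ∑ p ∈ antidiagonal n, a p.1 * b p.2 := by
        rw [ENNReal.tsum_sigma']
        exact tsum_congr fun n => Finset.tsum_subtype _ fun p : ℕ × ℕ => a p.1 * b p.2
    _ = ∑' n, ∑ k ∈ Finset.range (n + 1), a k * b (n - k) :=
        tsum_congr fun n => Finset.Nat.sum_antidiagonal_eq_sum_range_succ_mk _ n

lemma ENNReal.tsum_ne_top_of_renewal {u f : ℕ → ℝ≥0∞} (hu_ne_top : ∀ n, u n ≠ ∞)
    (hu : ∀ n, u (n + 1) ≤ ∑ k ∈ Finset.range (n + 1), f k * u (n - k))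
    (hf : ∑' k, f k < 1) :
    ∑' n, u n ≠ ∞ := by
  set R := ∑' k, f k
  have hpartial : ∀ N, ∑ n ∈ Finset.range (N + 1), u n ≤ u 0 / (1 - R) := by
    intro N
    -- the truncation `v` of `u` after time `N` satisfies the same renewal inequality
    set v : ℕ → ℝ≥0∞ := fun n => if n ≤ N then u n else 0
    set S := ∑ n ∈ Finset.range (N + 1), u n
    have hvS : ∑' n, v n = S := by
      rw [tsum_eq_sum (s := Finset.range (N + 1)) fun n hn => if_neg (by simpa using hn)]
      exact Finset.sum_congr rfl fun n hn => if_pos (Nat.lt_succ_iff.1 (Finset.mem_range.1 hn))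
    have hvstep : ∀ n, v (n + 1) ≤ ∑ k ∈ Finset.range (n + 1), f k * v (n - k) := by
      intro n
      by_cases hn : n + 1 ≤ N
      · simp only [v, if_pos hn]
        refine (hu n).trans (Finset.sum_le_sum fun k _ => ?_)
        rw [if_pos (by omega)]
      · simp [v, if_neg hn]
    have hrec : S ≤ u 0 + R * S := by
      calc S = v 0 + ∑' n, v (n + 1) := by rw [← hvS, tsum_eq_zero_add' ENNReal.summable]
        _ ≤ u 0 + ∑' n, ∑ k ∈ Finset.range (n + 1), f k * v (n - k) :=
          add_le_add (by simp [v]) (ENNReal.tsum_le_tsum hvstep)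
        _ = u 0 + R * S := by
          rw [← hvS, ENNReal.tsum_mul_tsum_eq_tsum_sum_range]
    have hS : S ≠ ∞ := ENNReal.sum_ne_top.2 fun n _ => hu_ne_top n
    rw [ENNReal.le_div_iff_mul_le (Or.inl (tsub_pos_of_lt hf).ne') (Or.inl (by simp)),
      ENNReal.mul_sub (fun _ _ => hS), mul_one, mul_comm]
    exact tsub_le_iff_right.2 hrec
  refine ne_top_of_le_ne_top (ENNReal.div_ne_top (hu_ne_top 0) (tsub_pos_of_lt hf).ne') ?_
  rw [ENNReal.tsum_eq_iSup_nat]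
  exact iSup_le fun N => (Finset.sum_le_sum_of_subset (by simp)).trans (hpartial N)

lemma ENNReal.tsum_toReal_mul_sub {ι : Type*} {a b : ι → ℝ≥0∞} (ha : ∑' i, a i = 1)
    (hab : ∑' i, a i * b i ≠ ∞) (c : ℝ) :
    ∑' i, (a i).toReal * ((b i).toReal - c) = (∑' i, a i * b i).toReal - c := by
  have hab' : ∀ i, a i * b i ≠ ∞ := fun i => ne_top_of_le_ne_top hab (ENNReal.le_tsum i)
  have ha' : ∀ i, a i ≠ ∞ := fun i =>
    ne_top_of_le_ne_top (ha ▸ ENNReal.one_ne_top) (ENNReal.le_tsum i)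
  simp_rw [mul_sub, ← ENNReal.toReal_mul]
  rw [(ENNReal.summable_toReal hab).tsum_sub
      ((ENNReal.summable_toReal (ha ▸ ENNReal.one_ne_top)).mul_right c),
    tsum_mul_right, ← ENNReal.tsum_toReal_eq hab', ← ENNReal.tsum_toReal_eq ha', ha,
    ENNReal.toReal_one, one_mul]

-- `Real.log 0 = 0` makes `surprisal 0 = 0` rather than `∞`; harmless, as it is always weighted
-- by `p`.
def surprisal (p : ℝ≥0∞) : ℝ≥0∞ := ENNReal.ofReal (-Real.log p.toReal)

lemma surprisal_mul_le (a b : ℝ≥0∞) : surprisal (a * b) ≤ surprisal a + surprisal b := by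
  rcases eq_or_ne a 0 with rfl | ha0
  · simp [surprisal]
  rcases eq_or_ne b 0 with rfl | hb0
  · simp [surprisal]
  rcases eq_or_ne a ∞ with rfl | ha
  · simp [surprisal, ENNReal.top_mul hb0]
  rcases eq_or_ne b ∞ with rfl | hb
  · simp [surprisal, ENNReal.mul_top ha0]
  rw [surprisal, ENNReal.toReal_mul, Real.log_mul (ENNReal.toReal_ne_zero.2 ⟨ha0, ha⟩)
    (ENNReal.toReal_ne_zero.2 ⟨hb0, hb⟩), neg_add]
  exact ENNReal.ofReal_add_le

lemma mul_surprisal_le_mul_surprisal {a b : ℝ≥0∞} (hab : a ≤ b) (hb : b ≠ ∞) :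
    a * surprisal b ≤ a * surprisal a := by
  rcases eq_or_ne a 0 with rfl | ha0
  · simp
  refine mul_le_mul_right (ENNReal.ofReal_le_ofReal (neg_le_neg ?_)) a
  exact Real.log_le_log (ENNReal.toReal_pos ha0 (ne_top_of_le_ne_top hb hab))
    (ENNReal.toReal_mono hb hab)

lemma mul_surprisal_eq_ofReal_negMulLog {p : ℝ≥0∞} (hp : p ≠ ∞) :
    p * surprisal p = ENNReal.ofReal (Real.negMulLog p.toReal) := by
  rw [surprisal, Real.negMulLog, neg_mul, ← mul_neg, ENNReal.ofReal_mul ENNReal.toReal_nonneg,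
    ENNReal.ofReal_toReal hp]

def massEntropy {α : Type*} (p : α → ℝ≥0∞) : ℝ≥0∞ := ∑' x, p x * surprisal (p x)

lemma massEntropy_ne_top_of_summable {α : Type*} {p : α → ℝ≥0∞} (hp : ∀ x, p x ≤ 1)
    (h : Summable fun x => Real.negMulLog (p x).toReal) : massEntropy p ≠ ∞ := by
  have hp_ne_top : ∀ x, p x ≠ ∞ := fun x => ne_top_of_le_ne_top ENNReal.one_ne_top (hp x)
  rw [massEntropy, tsum_congr fun x => mul_surprisal_eq_ofReal_negMulLog (hp_ne_top x),
    ← ENNReal.ofReal_tsum_of_nonneg (fun x => Real.negMulLog_nonneg ENNReal.toReal_nonneg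
      (ENNReal.toReal_le_of_le_ofReal zero_le_one (by simpa using hp x))) h]
  exact ENNReal.ofReal_ne_top

lemma tsum_measure_singleton_eq_one {α : Type*} [MeasurableSpace α] [Countable α]
    [MeasurableSingletonClass α] (ν : Measure α) [IsProbabilityMeasure ν] :
    ∑' x, ν {x} = 1 := by
  simpa using ν.tsum_indicator_apply_singleton Set.univ MeasurableSet.univ

section ConvPow

variable [Group Γ] [MeasurableSpace Γ]

open scoped Classical in
def convPow (μ : Measure Γ) : ℕ → Γ → ℝ≥0∞
  | 0 => fun y => if y = 1 then 1 else 0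
  | n + 1 => fun y => ∑' g, μ {g} * convPow μ n (g⁻¹ * y)

lemma mul_convPow_le_convPow_succ (μ : Measure Γ) (n : ℕ) (g y : Γ) :
    μ {g} * convPow μ n y ≤ convPow μ (n + 1) (g * y) := by
  simpa [convPow] using ENNReal.le_tsum (f := fun x => μ {x} * convPow μ n (x⁻¹ * (g * y))) g

lemma tsum_convPow_succ_mul (μ : Measure Γ) (n : ℕ) (f : Γ → ℝ≥0∞) :
    ∑' y, convPow μ (n + 1) y * f y = ∑' g, μ {g} * ∑' y, convPow μ n y * f (g * y) := by
  calc ∑' y, convPow μ (n + 1) y * f y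
      = ∑' y, ∑' g, μ {g} * (convPow μ n (g⁻¹ * y) * f y) := by
        simp_rw [convPow, ← ENNReal.tsum_mul_right, mul_assoc]
    _ = ∑' g, μ {g} * ∑' y, convPow μ n (g⁻¹ * y) * f y := by
        rw [ENNReal.tsum_comm]
        exact tsum_congr fun g => ENNReal.tsum_mul_left
    _ = ∑' g, μ {g} * ∑' y, convPow μ n y * f (g * y) := by
        refine tsum_congr fun g => ?_
        rw [← (Equiv.mulLeft g).tsum_eq]
        simp

variable [Countable Γ] [MeasurableSingletonClass Γ] (μ : Measure Γ) [IsProbabilityMeasure μ]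

lemma tsum_convPow (n : ℕ) : ∑' y, convPow μ n y = 1 := by
  induction n with
  | zero => classical simp [convPow]
  | succ n ih =>
    simpa [ih, tsum_measure_singleton_eq_one] using tsum_convPow_succ_mul μ n 1

lemma convPow_le_one (n : ℕ) (y : Γ) : convPow μ n y ≤ 1 :=
  (tsum_convPow μ n).symm ▸ ENNReal.le_tsum y

lemma massEntropy_convPow_succ_le (n : ℕ) :
    massEntropy (convPow μ (n + 1)) ≤ massEntropy (fun g => μ {g}) + massEntropy (convPow μ n) := by
  calc massEntropy (convPow μ (n + 1))
      = ∑' g, ∑' y, μ {g} * convPow μ n y * surprisal (convPow μ (n + 1) (g * y)) := by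
        simp_rw [massEntropy, tsum_convPow_succ_mul, ← ENNReal.tsum_mul_left, mul_assoc]
    _ ≤ ∑' g, ∑' y, μ {g} * convPow μ n y * (surprisal (μ {g}) + surprisal (convPow μ n y)) := by
        refine ENNReal.tsum_le_tsum fun g => ENNReal.tsum_le_tsum fun y => ?_
        exact (mul_surprisal_le_mul_surprisal (mul_convPow_le_convPow_succ μ n g y)
          (ne_top_of_le_ne_top ENNReal.one_ne_top (convPow_le_one μ _ _))).trans
          (mul_le_mul_right (surprisal_mul_le _ _) _)
    _ = ∑' g, (μ {g} * surprisal (μ {g}) * ∑' y, convPow μ n y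
          + μ {g} * ∑' y, convPow μ n y * surprisal (convPow μ n y)) := by
        refine tsum_congr fun g => ?_
        rw [← ENNReal.tsum_mul_left, ← ENNReal.tsum_mul_left, ← ENNReal.tsum_add]
        exact tsum_congr fun y => by ring
    _ = massEntropy (fun g => μ {g}) + massEntropy (convPow μ n) := by
        rw [ENNReal.tsum_add, ENNReal.tsum_mul_right, tsum_convPow, mul_one, ENNReal.tsum_mul_right,
          tsum_measure_singleton_eq_one, one_mul, massEntropy, massEntropy]

lemma massEntropy_convPow_ne_top (hμ : massEntropy (fun g => μ {g}) ≠ ∞) (n : ℕ) :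
    massEntropy (convPow μ n) ≠ ∞ := by
  induction n with
  | zero =>
    classical
    convert ENNReal.zero_ne_top
    refine ENNReal.tsum_eq_zero.2 fun y => ?_
    by_cases hy : y = 1 <;> simp [convPow, surprisal, hy]
  | succ n ih =>
    exact ne_top_of_le_ne_top (ENNReal.add_ne_top.2 ⟨hμ, ih⟩) (massEntropy_convPow_succ_le μ n)

end ConvPow

structure IsIIDSequence [MeasurableSpace Ω] [MeasurableSpace Γ] (P : Measure Ω) (μ : Measure Γ)
    (X : ℕ → Ω → Γ) : Prop where
  measurable : ∀ k, Measurable (X k)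
  indep : iIndepFun X P
  map_eq : ∀ k, P.map (X k) = μ

abbrev stepSigma [MeasurableSpace Γ] (X : ℕ → Ω → Γ) (S : Set ℕ) : MeasurableSpace Ω :=
  ⨆ i ∈ S, MeasurableSpace.comap (X i) ‹_›

lemma measurable_stepSigma [MeasurableSpace Γ] (X : ℕ → Ω → Γ) {S : Set ℕ} {i : ℕ} (hi : i ∈ S) :
    Measurable[stepSigma X S] (X i) :=
  Measurable.of_comap_le (le_iSup₂ (f := fun i (_ : i ∈ S) => MeasurableSpace.comap (X i) _) i hi)

lemma stepSigma_le [MeasurableSpace Γ] [MeasurableSpace Ω] {X : ℕ → Ω → Γ}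
    (hmeas : ∀ k, Measurable (X k)) (S : Set ℕ) : stepSigma X S ≤ ‹MeasurableSpace Ω› :=
  iSup₂_le fun i _ => (hmeas i).comap_le

lemma ProbabilityTheory.iIndepFun.measure_inter_eq_mul_of_disjoint [MeasurableSpace Γ]
    [MeasurableSpace Ω] {P : Measure Ω} {X : ℕ → Ω → Γ} (hiid : iIndepFun X P)
    (hmeas : ∀ k, Measurable (X k)) {S T : Set ℕ} (hST : Disjoint S T) {A B : Set Ω}
    (hA : MeasurableSet[stepSigma X S] A) (hB : MeasurableSet[stepSigma X T] B) :
    P (A ∩ B) = P A * P B :=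
  (Indep_iff _ _ P).1 (indep_iSup_of_disjoint (fun i => (hmeas i).comap_le)
    ((iIndepFun_iff_iIndep _ _ _).1 hiid) hST) A B hA hB

section WindowProd

variable [Group Γ]

def windowProd (X : ℕ → Ω → Γ) (j n : ℕ) (ω : Ω) : Γ :=
  ((List.range n).map fun k => X (j + k) ω).prod

lemma walk_eq_mul_windowProd (x : Γ) (X : ℕ → Ω → Γ) (n : ℕ) (ω : Ω) :
    walk x X n ω = x * windowProd X 0 n ω := by
  simp [walk, windowProd]

lemma windowProd_zero (X : ℕ → Ω → Γ) (j : ℕ) (ω : Ω) : windowProd X j 0 ω = 1 := by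
  simp [windowProd]

lemma windowProd_add (X : ℕ → Ω → Γ) (j m n : ℕ) (ω : Ω) :
    windowProd X j (m + n) ω = windowProd X j m ω * windowProd X (j + m) n ω := by
  simp [windowProd, List.range_add, Function.comp_def, add_assoc]

lemma windowProd_succ (X : ℕ → Ω → Γ) (j n : ℕ) (ω : Ω) :
    windowProd X j (n + 1) ω = X j ω * windowProd X (j + 1) n ω := by
  rw [add_comm, windowProd_add]
  simp [windowProd]

lemma walk_one_eq_mul_windowProd {k n : ℕ} (hkn : k ≤ n) (X : ℕ → Ω → Γ) (ω : Ω) :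
    walk 1 X n ω = walk 1 X k ω * windowProd X k (n - k) ω := by
  conv_lhs => rw [← Nat.add_sub_cancel' hkn]
  simp only [walk_eq_mul_windowProd, one_mul, windowProd_add, zero_add]

variable [MeasurableSpace Γ] [Countable Γ] [MeasurableSingletonClass Γ]

lemma measurable_windowProd {m : MeasurableSpace Ω} {X : ℕ → Ω → Γ} {j n : ℕ}
    (hX : ∀ k < n, Measurable (X (j + k))) : Measurable (windowProd X j n) := by
  convert List.measurable_prod ((List.range n).map fun k => X (j + k)) (by simpa using hX)
  ext ω
  simp [windowProd, Pi.list_prod_apply, Function.comp_def]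

lemma measurable_walk {m : MeasurableSpace Ω} {X : ℕ → Ω → Γ} {n : ℕ}
    (hX : ∀ k < n, Measurable (X k)) (x : Γ) : Measurable (walk x X n) := by
  simp_rw [funext (walk_eq_mul_windowProd x X n)]
  exact measurable_const.mul (measurable_windowProd fun k hk => by simpa using hX k hk)

lemma measurableSet_windowProd_eq {X : ℕ → Ω → Γ} {S : Set ℕ} {j n : ℕ}
    (hS : ∀ k < n, j + k ∈ S) (y : Γ) :
    MeasurableSet[stepSigma X S] {ω | windowProd X j n ω = y} :=
  measurable_windowProd (fun k hk => measurable_stepSigma X (hS k hk)) (measurableSet_singleton y)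

end WindowProd

section Walk

variable [Group Γ] [MeasurableSpace Γ] [Countable Γ] [MeasurableSingletonClass Γ]
  [MeasurableSpace Ω] {P : Measure Ω} {μ : Measure Γ} {X : ℕ → Ω → Γ}

namespace IsIIDSequence

protected lemma measurable_walk (hX : IsIIDSequence P μ X) (x : Γ) (n : ℕ) :
    Measurable (walk x X n) :=
  measurable_walk (fun k _ => hX.measurable k) x

variable [IsProbabilityMeasure P]

lemma measure_windowProd_eq (hX : IsIIDSequence P μ X) (n j : ℕ) (y : Γ) :
    P {ω | windowProd X j n ω = y} = convPow μ n y := by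
  induction n generalizing j y with
  | zero =>
    classical
    by_cases hy : y = 1 <;> simp [windowProd_zero, convPow, hy, eq_comm]
  | succ n ih =>
    have hset : {ω | windowProd X j (n + 1) ω = y}
        = ⋃ g, {ω | X j ω = g} ∩ {ω | windowProd X (j + 1) n ω = g⁻¹ * y} := by
      ext ω
      simp [windowProd_succ, eq_inv_mul_iff_mul_eq]
    have hA : ∀ g, MeasurableSet[stepSigma X {j}] {ω | X j ω = g} := fun g =>
      measurable_stepSigma X (Set.mem_singleton j) (measurableSet_singleton g)
    have hB : ∀ g, MeasurableSet[stepSigma X (Set.Ioi j)]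
        {ω | windowProd X (j + 1) n ω = g⁻¹ * y} :=
      fun g => measurableSet_windowProd_eq (fun k _ => by simp; omega) _
    have hle := stepSigma_le hX.measurable
    rw [hset, measure_iUnion
      (fun g g' hne => Set.disjoint_left.2 fun ω h h' => hne (h.1.symm.trans h'.1))
      (fun g => (hle _ _ (hA g)).inter (hle _ _ (hB g)))]
    refine tsum_congr fun g => ?_
    rw [hX.indep.measure_inter_eq_mul_of_disjoint hX.measurable (by simp) (hA g) (hB g), ih,
      ← hX.map_eq j, Measure.map_apply (hX.measurable j) (measurableSet_singleton g)]
    rfl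

lemma measure_walk_eq (hX : IsIIDSequence P μ X) (n : ℕ) (y : Γ) :
    P {ω | walk 1 X n ω = y} = convPow μ n y := by
  simpa [walk_eq_mul_windowProd] using hX.measure_windowProd_eq n 0 y

lemma lintegral_comp_walk (hX : IsIIDSequence P μ X) (n : ℕ) (f : Γ → ℝ≥0∞) :
    ∫⁻ ω, f (walk 1 X n ω) ∂P = ∑' y, convPow μ n y * f y := by
  rw [← lintegral_map (measurable_of_countable f) (hX.measurable_walk 1 n),
    lintegral_countable']
  refine tsum_congr fun y => ?_
  rw [Measure.map_apply (hX.measurable_walk 1 n) (measurableSet_singleton y), mul_comm,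
    ← hX.measure_walk_eq n y]
  rfl

lemma integral_comp_walk (hX : IsIIDSequence P μ X) (n : ℕ) {f : Γ → ℝ} (hf : 0 ≤ f) :
    ∫ ω, f (walk 1 X n ω) ∂P = (∑' y, convPow μ n y * ENNReal.ofReal (f y)).toReal := by
  rw [integral_eq_lintegral_of_nonneg_ae (ae_of_all _ fun ω => hf (walk 1 X n ω))
    ((measurable_of_countable f).comp (hX.measurable_walk 1 n)).aestronglyMeasurable,
    hX.lintegral_comp_walk n fun y => ENNReal.ofReal (f y)]

lemma integrable_comp_walk (hX : IsIIDSequence P μ X) (n : ℕ) {f : Γ → ℝ} (hf : 0 ≤ f)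
    (hfin : ∑' y, convPow μ n y * ENNReal.ofReal (f y) ≠ ∞) :
    Integrable (fun ω => f (walk 1 X n ω)) P := by
  refine ⟨((measurable_of_countable f).comp (hX.measurable_walk 1 n)).aestronglyMeasurable, ?_⟩
  rw [hasFiniteIntegral_iff_ofReal (ae_of_all _ fun ω => hf (walk 1 X n ω)),
    hX.lintegral_comp_walk n fun y => ENNReal.ofReal (f y)]
  exact hfin.lt_top

lemma ae_convPow_walk_ne_zero (hX : IsIIDSequence P μ X) (n : ℕ) :
    ∀ᵐ ω ∂P, convPow μ n (walk 1 X n ω) ≠ 0 := by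
  rw [ae_iff]
  refine measure_mono_null (t := ⋃ y ∈ {y | convPow μ n y = 0}, {ω | walk 1 X n ω = y})
    (fun ω hω => Set.mem_biUnion (not_not.1 hω) rfl) ?_
  exact (measure_biUnion_null_iff (Set.to_countable _)).2 fun y hy =>
    (hX.measure_walk_eq n y).trans hy

end IsIIDSequence

end Walk

section FirstHit

variable [Group Γ]

-- `t = 0` gives the first visit to `y`, `t = 1` the first return when `y = 1`.
def firstHit (X : ℕ → Ω → Γ) (t k : ℕ) (y : Γ) : Set Ω :=
  {ω | t ≤ k ∧ walk 1 X k ω = y ∧ ∀ j, t ≤ j → j < k → walk 1 X j ω ≠ y}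

lemma pairwise_disjoint_firstHit (X : ℕ → Ω → Γ) (t : ℕ) (y : Γ) :
    Pairwise (Function.onFun Disjoint fun k => firstHit X t k y) := by
  refine (pairwise_disjoint_on _).2 fun k k' hkk' => Set.disjoint_left.2 ?_
  rintro ω ⟨htk, hk, -⟩ ⟨-, -, hk'⟩
  exact hk' k htk hkk' hk

lemma iUnion_firstHit (X : ℕ → Ω → Γ) (t : ℕ) (y : Γ) :
    ⋃ k, firstHit X t k y = {ω | ∃ n ≥ t, walk 1 X n ω = y} := by
  ext ω
  simp only [Set.mem_iUnion, Set.mem_ofPred_eq]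
  constructor
  · rintro ⟨k, htk, hk, -⟩
    exact ⟨k, htk, hk⟩
  · intro h
    classical
    exact ⟨Nat.find h, (Nat.find_spec h).1, (Nat.find_spec h).2,
      fun j htj hj hjy => Nat.find_min h hj ⟨htj, hjy⟩⟩

variable [MeasurableSpace Γ] [Countable Γ] [MeasurableSingletonClass Γ]

lemma measurableSet_firstHit {X : ℕ → Ω → Γ} (t k : ℕ) (y : Γ) :
    MeasurableSet[stepSigma X (Set.Iio k)] (firstHit X t k y) := by
  have hwalk : ∀ j ≤ k, MeasurableSet[stepSigma X (Set.Iio k)] {ω | walk 1 X j ω = y} :=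
    fun j hj => measurable_walk (m := stepSigma X (Set.Iio k))
      (fun i hi => measurable_stepSigma X (Set.mem_Iio.2 (by omega))) 1 (measurableSet_singleton y)
  simp only [firstHit, Set.ofPred_and, Set.ofPred_forall]
  refine (MeasurableSet.const _).inter ((hwalk k le_rfl).inter ?_)
  exact MeasurableSet.iInter fun j => MeasurableSet.iInter fun _ =>
    MeasurableSet.iInter fun hjk => (hwalk j hjk.le).compl

end FirstHit

section FirstHitMeasure

variable [Group Γ] [MeasurableSpace Γ] [Countable Γ] [MeasurableSingletonClass Γ]
  [MeasurableSpace Ω] {P : Measure Ω} {μ : Measure Γ} {X : ℕ → Ω → Γ}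

lemma measure_exists_walk_eq_tsum_firstHit (hmeas : ∀ k, Measurable (X k)) (t : ℕ) (y : Γ) :
    P {ω | ∃ n ≥ t, walk 1 X n ω = y} = ∑' k, P (firstHit X t k y) := by
  rw [← iUnion_firstHit, measure_iUnion (pairwise_disjoint_firstHit X t y)
    fun k => stepSigma_le hmeas _ _ (measurableSet_firstHit t k y)]

lemma IsIIDSequence.measure_walk_eq_sum_firstHit [IsProbabilityMeasure P]
    (hX : IsIIDSequence P μ X) {t n : ℕ} (htn : t ≤ n) (y : Γ) :
    P {ω | walk 1 X n ω = y}
      = ∑ k ∈ Finset.range (n + 1), P (firstHit X t k y) * convPow μ (n - k) 1 := by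
  have hset : {ω | walk 1 X n ω = y}
      = ⋃ k ∈ Finset.range (n + 1), firstHit X t k y ∩ {ω | windowProd X k (n - k) ω = 1} := by
    ext ω
    simp only [Set.mem_ofPred_eq, Set.mem_iUnion, Set.mem_inter_iff, Finset.mem_range]
    constructor
    · intro hn
      obtain ⟨k, hk⟩ := Set.mem_iUnion.1 ((iUnion_firstHit X t y).symm ▸ ⟨n, htn, hn⟩ :
        ω ∈ ⋃ k, firstHit X t k y)
      have hkn : k ≤ n := not_lt.1 fun hnk => hk.2.2 n htn hnk hn
      refine ⟨k, Nat.lt_succ_of_le hkn, hk, ?_⟩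
      rwa [walk_one_eq_mul_windowProd hkn, hk.2.1, mul_eq_left] at hn
    · rintro ⟨k, hkn, hk, hw⟩
      rw [walk_one_eq_mul_windowProd (Nat.le_of_lt_succ hkn), hk.2.1, hw, mul_one]
  have hB : ∀ k, MeasurableSet[stepSigma X (Set.Ici k)] {ω | windowProd X k (n - k) ω = 1} :=
    fun k => measurableSet_windowProd_eq (fun i _ => Set.mem_Ici.2 (Nat.le_add_right k i)) 1
  rw [hset, measure_biUnion_finset (fun k _ k' _ hkk' =>
    (pairwise_disjoint_firstHit X t y hkk').mono Set.inter_subset_left Set.inter_subset_left)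
    fun k _ =>
      (stepSigma_le hX.measurable _ _ (measurableSet_firstHit t k y)).inter
        (stepSigma_le hX.measurable _ _ (hB k))]
  refine Finset.sum_congr rfl fun k _ => ?_
  rw [hX.indep.measure_inter_eq_mul_of_disjoint hX.measurable (Set.Iio_disjoint_Ici le_rfl)
    (measurableSet_firstHit t k y) (hB k), hX.measure_windowProd_eq]

end FirstHitMeasure

section GreenFn

variable [Group Γ] [MeasurableSpace Ω] {P : Measure Ω} {X : ℕ → Ω → Γ}

lemma greenFn_eq_greenFn_one (P : Measure Ω) (X : ℕ → Ω → Γ) (x y : Γ) :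
    greenFn P X x y = greenFn P X 1 (x⁻¹ * y) := by
  refine tsum_congr fun n => congrArg P (Set.ext fun ω => ?_)
  simp [walk_eq_mul_windowProd, eq_inv_mul_iff_mul_eq]

lemma one_le_greenFn_one_one [IsProbabilityMeasure P] : 1 ≤ greenFn P X 1 1 :=
  le_of_eq_of_le (by simp [walk]) (ENNReal.le_tsum 0)

lemma greenDist_nonneg [IsProbabilityMeasure P] (x y : Γ) : 0 ≤ greenDist P X x y :=
  neg_nonneg.2 (Real.log_nonpos ENNReal.toReal_nonneg
    (ENNReal.toReal_le_of_le_ofReal zero_le_one (ENNReal.ofReal_one.symm ▸ prob_le_one)))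

variable [MeasurableSpace Γ] [Countable Γ] [MeasurableSingletonClass Γ] {μ : Measure Γ}
  [IsProbabilityMeasure P]

namespace IsIIDSequence

lemma greenFn_one_eq_tsum_convPow (hX : IsIIDSequence P μ X) (y : Γ) :
    greenFn P X 1 y = ∑' n, convPow μ n y :=
  tsum_congr fun n => hX.measure_walk_eq n y

lemma convPow_le_hitProb (hX : IsIIDSequence P μ X) (n : ℕ) (y : Γ) :
    convPow μ n y ≤ hitProb P X 1 y :=
  hX.measure_walk_eq n y ▸ measure_mono fun _ hω => ⟨n, hω⟩

lemma greenFn_one_eq_hitProb_mul (hX : IsIIDSequence P μ X) (y : Γ) :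
    greenFn P X 1 y = hitProb P X 1 y * greenFn P X 1 1 := by
  have hF : hitProb P X 1 y = ∑' k, P (firstHit X 0 k y) := by
    simpa [hitProb] using measure_exists_walk_eq_tsum_firstHit hX.measurable 0 y
  rw [hF, hX.greenFn_one_eq_tsum_convPow 1, ENNReal.tsum_mul_tsum_eq_tsum_sum_range]
  exact tsum_congr fun n => hX.measure_walk_eq_sum_firstHit n.zero_le y

lemma greenFn_one_one_ne_top (hX : IsIIDSequence P μ X)
    (htrans : P {ω | ∃ n ≥ 1, walk 1 X n ω = 1} < 1) : greenFn P X 1 1 ≠ ∞ := by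
  rw [hX.greenFn_one_eq_tsum_convPow]
  -- renewal equation: decompose a return to `1` at time `n + 1` by the first return time `k + 1`
  refine ENNReal.tsum_ne_top_of_renewal (f := fun k => P (firstHit X 1 (k + 1) 1))
    (fun n => ne_top_of_le_ne_top ENNReal.one_ne_top (hX.measure_walk_eq n 1 ▸ prob_le_one))
    (fun n => le_of_eq ?_) ?_
  · rw [← hX.measure_walk_eq, hX.measure_walk_eq_sum_firstHit (Nat.le_add_left 1 n),
      Finset.sum_range_succ']
    simp [firstHit]
  · rwa [measure_exists_walk_eq_tsum_firstHit hX.measurable, tsum_eq_zero_add' ENNReal.summable,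
      show firstHit X 1 0 1 = ∅ by simp [firstHit], measure_empty, zero_add] at htrans

end IsIIDSequence

end GreenFn

section MartinKernel

variable [Group Γ] [MeasurableSpace Γ] [Countable Γ] [MeasurableSingletonClass Γ]
  [MeasurableSpace Ω] {P : Measure Ω} [IsProbabilityMeasure P] {μ : Measure Γ} {X : ℕ → Ω → Γ}

namespace IsIIDSequence

lemma neg_log_martinK_eq (hX : IsIIDSequence P μ X)
    (htrans : P {ω | ∃ n ≥ 1, walk 1 X n ω = 1} < 1) {g y : Γ} (hy : hitProb P X 1 y ≠ 0)
    (hgy : hitProb P X 1 (g⁻¹ * y) ≠ 0) :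
    -Real.log (martinK P X g y) = greenDist P X 1 (g⁻¹ * y) - greenDist P X 1 y := by
  have hG : (greenFn P X 1 1).toReal ≠ 0 := ENNReal.toReal_ne_zero.2
    ⟨(zero_lt_one.trans_le one_le_greenFn_one_one).ne', hX.greenFn_one_one_ne_top htrans⟩
  have hF : ∀ z, hitProb P X 1 z ≠ 0 → (hitProb P X 1 z).toReal ≠ 0 := fun z hz =>
    ENNReal.toReal_ne_zero.2 ⟨hz, measure_ne_top P _⟩
  rw [martinK, greenFn_eq_greenFn_one, hX.greenFn_one_eq_hitProb_mul (g⁻¹ * y),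
    hX.greenFn_one_eq_hitProb_mul y, ENNReal.toReal_mul, ENNReal.toReal_mul,
    mul_div_mul_right _ _ hG, Real.log_div (hF _ hgy) (hF _ hy), greenDist, greenDist]
  ring

lemma tsum_convPow_mul_greenDist_le (hX : IsIIDSequence P μ X) (n : ℕ) :
    ∑' y, convPow μ n y * ENNReal.ofReal (greenDist P X 1 y) ≤ massEntropy (convPow μ n) :=
  ENNReal.tsum_le_tsum fun y =>
    mul_surprisal_le_mul_surprisal (hX.convPow_le_hitProb n y) (measure_ne_top P _)

lemma integral_neg_log_martinK_walk (hX : IsIIDSequence P μ X)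
    (htrans : P {ω | ∃ n ≥ 1, walk 1 X n ω = 1} < 1) {n : ℕ} {g : Γ} (hg : μ {g⁻¹} ≠ 0)
    (hJ : ∑' y, convPow μ n y * ENNReal.ofReal (greenDist P X 1 (g⁻¹ * y)) ≠ ∞)
    (hI : ∑' y, convPow μ n y * ENNReal.ofReal (greenDist P X 1 y) ≠ ∞) :
    ∫ ω, -Real.log (martinK P X g (walk 1 X n ω)) ∂P
      = (∑' y, convPow μ n y * ENNReal.ofReal (greenDist P X 1 (g⁻¹ * y))).toReal
        - (∑' y, convPow μ n y * ENNReal.ofReal (greenDist P X 1 y)).toReal := by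
  have hae : (fun ω => -Real.log (martinK P X g (walk 1 X n ω))) =ᵐ[P]
      fun ω => greenDist P X 1 (g⁻¹ * walk 1 X n ω) - greenDist P X 1 (walk 1 X n ω) := by
    filter_upwards [hX.ae_convPow_walk_ne_zero n] with ω hω
    refine hX.neg_log_martinK_eq htrans ?_ ?_
    · exact ne_bot_of_le_ne_bot hω (hX.convPow_le_hitProb n _)
    · refine ne_bot_of_le_ne_bot ?_ (hX.convPow_le_hitProb (n + 1) _)
      exact ne_bot_of_le_ne_bot (mul_ne_zero hg hω) (mul_convPow_le_convPow_succ μ n g⁻¹ _)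
  have hd : 0 ≤ greenDist P X 1 := fun z => greenDist_nonneg 1 z
  have hdg : 0 ≤ fun z => greenDist P X 1 (g⁻¹ * z) := fun z => hd (g⁻¹ * z)
  rw [integral_congr_ae hae, integral_sub (hX.integrable_comp_walk n hdg hJ)
    (hX.integrable_comp_walk n hd hI), hX.integral_comp_walk n hdg, hX.integral_comp_walk n hd]

end IsIIDSequence

end MartinKernel

theorem greenDist_increment_eq_martin_kernel_integral_general
    [Group Γ] [Countable Γ] [MeasurableSpace Γ] [MeasurableSingletonClass Γ]
    [MeasurableSpace Ω] (P : Measure Ω) [IsProbabilityMeasure P]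
    (μ : Measure Γ) [IsProbabilityMeasure μ]
    (X : ℕ → Ω → Γ) (hmeas : ∀ k, Measurable (X k))
    (hiid : iIndepFun X P)
    (hlaw : ∀ k, Measure.map (X k) P = μ)
    (htrans : P {ω | ∃ n ≥ 1, walk 1 X n ω = 1} < 1)
    (hent : Summable fun g : Γ => Real.negMulLog (μ {g}).toReal) :
    ∀ n : ℕ,
      ∫ ω, (greenDist P X 1 (walk 1 X (n + 1) ω)
              - greenDist P X 1 (walk 1 X n ω)) ∂P
        = ∑' g : Γ, (μ {g⁻¹}).toReal *
            ∫ ω, - Real.log (martinK P X g (walk 1 X n ω)) ∂P := by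
  intro n
  have hX : IsIIDSequence P μ X := ⟨hmeas, hiid, hlaw⟩
  set d := greenDist P X 1
  set I : ℕ → ℝ≥0∞ := fun m => ∑' y, convPow μ m y * ENNReal.ofReal (d y)
  set J : Γ → ℝ≥0∞ := fun g => ∑' y, convPow μ n y * ENNReal.ofReal (d (g⁻¹ * y))
  have hI : ∀ m, I m ≠ ∞ := fun m => ne_top_of_le_ne_top (massEntropy_convPow_ne_top μ
    (massEntropy_ne_top_of_summable (fun _ => prob_le_one) hent) m)
    (hX.tsum_convPow_mul_greenDist_le m)
  -- one step of the walk: `Z_{n+1} = X₁ Z'_n`, summed over `X₁ = g⁻¹`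
  have hIJ : ∑' g, μ {g⁻¹} * J g = I (n + 1) := by
    rw [← (Equiv.inv Γ).tsum_eq]
    simp [I, J, tsum_convPow_succ_mul]
  have hJ : ∀ g, μ {g⁻¹} ≠ 0 → J g ≠ ∞ := fun g hg hJg =>
    hI (n + 1) (top_unique (hIJ ▸ (ENNReal.mul_top hg ▸ hJg ▸ ENNReal.le_tsum g)))
  have hterm : ∀ g, (μ {g⁻¹}).toReal * ∫ ω, -Real.log (martinK P X g (walk 1 X n ω)) ∂P
      = (μ {g⁻¹}).toReal * ((J g).toReal - (I n).toReal) := fun g => by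
    rcases eq_or_ne (μ {g⁻¹}) 0 with hg | hg
    · simp [hg]
    · rw [hX.integral_neg_log_martinK_walk htrans hg (hJ g hg) (hI n)]
  have hμ : ∑' g, μ {g⁻¹} = 1 := by
    rw [← (Equiv.inv Γ).tsum_eq]
    simpa using tsum_measure_singleton_eq_one μ
  have hd : 0 ≤ d := fun z => greenDist_nonneg 1 z
  rw [integral_sub (hX.integrable_comp_walk _ hd (hI _)) (hX.integrable_comp_walk _ hd (hI _)),
    hX.integral_comp_walk _ hd, hX.integral_comp_walk _ hd, tsum_congr hterm,
    ENNReal.tsum_toReal_mul_sub hμ (hIJ ▸ hI (n + 1)), hIJ]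

/-- for every `n`,
`E[d_G(e,Z_{n+1}) - d_G(e,Z_n)] = Σ_x μ(x⁻¹) E[-ln K(x, Z_n)]`. -/
theorem greenDist_increment_eq_martin_kernel_integral
    [Group Γ] [Countable Γ] [MeasurableSpace Γ] [MeasurableSingletonClass Γ]
    [MeasurableSpace Ω] (P : Measure Ω) [IsProbabilityMeasure P]
    (μ : Measure Γ) [IsProbabilityMeasure μ]
    (X : ℕ → Ω → Γ) (hmeas : ∀ k, Measurable (X k))
    (hiid : iIndepFun X P)
    (hlaw : ∀ k, Measure.map (X k) P = μ)
    (hgen : Subgroup.closure {g : Γ | μ {g} ≠ 0} = ⊤)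
    (htrans : P {ω | ∃ n ≥ 1, walk 1 X n ω = 1} < 1)
    (hent : Summable fun g : Γ => Real.negMulLog (μ {g}).toReal) :
    ∀ n : ℕ,
      ∫ ω, (greenDist P X 1 (walk 1 X (n + 1) ω)
              - greenDist P X 1 (walk 1 X n ω)) ∂P
        = ∑' g : Γ, (μ {g⁻¹}).toReal *
            ∫ ω, - Real.log (martinK P X g (walk 1 X n ω)) ∂P :=
  greenDist_increment_eq_martin_kernel_integral_general P μ X hmeas hiid hlaw htrans hent
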